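/- Let ξ_1,…,ξ_N be independent Bernoulli random variables with parameters p_j ∈ (0,1), let ξ̄ = (1/N)·Σ_{j=1}^N ξ_j and p̄ = (1/N)·Σ_{j=1}^N p_j. For any ε, δ ∈ (0,1), set A = ε·ln(1/ε) + (1−ε)·ln(1/(1−ε)) + (1/N)·ln(1/δ). If 0 < p̄ ≤ 1/(1 + exp(A/ε)), then P(ξ̄ ≤ ε) ≥ 1 − δ. -/

import Mathlib

/-!
Chernoff's method. For `t ≥ 0`, `P(∑ ξ_j ≥ Nε) ≤ e^{-tNε} ∏ E e^{tξ_j}` with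
`E e^{tξ_j} = 1 + (e^t - 1) p_j`, and by AM-GM the product is at most `(1 + (e^t - 1) p̄)^N`.
At the optimal `t` the bound becomes `exp (-N kl(ε ‖ p̄))`, where `kl` is the relative entropy of
Bernoulli laws. Since `kl(ε ‖ p̄) ≥ ε log ((1 - p̄)/p̄) - h(ε)` with `h` the binary entropy, and the
hypothesis on `p̄` says exactly `ε log ((1 - p̄)/p̄) ≥ A = h(ε) + (1/N) log (1/δ)`, the tail is at
most `δ`.
-/

open MeasureTheory ProbabilityTheory Real Finset

namespace Real

theorem prod_le_mean_pow {ι : Type*} (s : Finset ι) {z : ι → ℝ} (hz : ∀ i ∈ s, 0 ≤ z i) :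
    ∏ i ∈ s, z i ≤ ((#s : ℝ)⁻¹ * ∑ i ∈ s, z i) ^ #s := by
  rcases s.eq_empty_or_nonempty with rfl | hs
  · simp
  have hgm := geom_mean_le_arith_mean s (fun _ => 1) z (fun _ _ => zero_le_one)
    (by simpa using hs.card_pos) hz
  simp only [rpow_one, one_mul, sum_const, nsmul_eq_mul, mul_one] at hgm
  calc ∏ i ∈ s, z i = ((∏ i ∈ s, z i) ^ (#s : ℝ)⁻¹) ^ #s :=
        (rpow_inv_natCast_pow (prod_nonneg hz) hs.card_pos.ne').symm
    _ ≤ _ := by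
        rw [inv_mul_eq_div]
        gcongr
        exact rpow_nonneg (prod_nonneg hz) _

noncomputable def binKLDiv (a q : ℝ) : ℝ := a * log (a / q) + (1 - a) * log ((1 - a) / (1 - q))

theorem sub_binEntropy_le_binKLDiv {a q : ℝ} (ha0 : 0 < a) (ha1 : a < 1) (hq0 : 0 < q)
    (hq1 : q < 1) : a * log ((1 - q) / q) - binEntropy a ≤ binKLDiv a q := by
  have h1a : 0 < 1 - a := by linarith
  have h1q : 0 < 1 - q := by linarith
  have hlog : log (1 - q) ≤ 0 := log_nonpos h1q.le (by linarith)
  rw [binKLDiv, binEntropy, log_div ha0.ne' hq0.ne', log_div h1a.ne' h1q.ne',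
    log_div h1q.ne' hq0.ne', log_inv, log_inv]
  nlinarith

/-- `t` is the minimiser of the Chernoff exponent `-t a + log (1 + (exp t - 1) q)`. -/
theorem exp_neg_mul_mul_one_add_pow_eq_exp_neg_binKLDiv {a q t : ℝ} (ha0 : 0 < a) (ha1 : a < 1)
    (hq0 : 0 < q) (hq1 : q < 1) (ht : exp t = a * (1 - q) / ((1 - a) * q)) (n : ℕ) :
    exp (-t * (n * a)) * (1 + (exp t - 1) * q) ^ n = exp (-(n * binKLDiv a q)) := by
  have h1a : 0 < 1 - a := by linarith
  have h1q : 0 < 1 - q := by linarith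
  have hmgf : 1 + (exp t - 1) * q = (1 - q) / (1 - a) := by
    rw [ht]
    field_simp
    ring
  have ht' : t = log a + log (1 - q) - log (1 - a) - log q := by
    rw [← log_exp t, ht, log_div (by positivity) (by positivity), log_mul ha0.ne' h1q.ne',
      log_mul h1a.ne' hq0.ne']
    ring
  rw [hmgf, ← exp_log (div_pos h1q h1a), ← exp_nat_mul, ← exp_add, binKLDiv,
    log_div ha0.ne' hq0.ne', log_div h1a.ne' h1q.ne', log_div h1q.ne' h1a.ne', ht']
  ring_nf

theorem le_log_one_sub_div_of_le_inv_one_add_exp {q c : ℝ} (hq : 0 < q)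
    (h : q ≤ 1 / (1 + exp c)) : c ≤ log ((1 - q) / q) := by
  rw [le_div_iff₀ (by positivity)] at h
  have h1q : 0 < 1 - q := by nlinarith [exp_pos c]
  rw [le_log_iff_exp_le (div_pos h1q hq), le_div_iff₀ hq]
  linarith

theorem le_of_le_inv_one_add_exp {a q c : ℝ} (ha0 : 0 < a) (ha1 : a < 1) (hq : 0 < q)
    (hc : 0 ≤ c) (h : q ≤ 1 / (1 + exp ((binEntropy a + c) / a))) : q ≤ a := by
  have hentropy : a * log a⁻¹ ≤ binEntropy a + c := by
    have : 0 ≤ (1 - a) * log (1 - a)⁻¹ :=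
      mul_nonneg (by linarith) (log_nonneg ((one_le_inv₀ (by linarith)).mpr (by linarith)))
    rw [binEntropy]
    linarith
  have hexp : a⁻¹ ≤ exp ((binEntropy a + c) / a) :=
    (log_le_iff_le_exp (inv_pos.mpr ha0)).mp (by rwa [le_div_iff₀' ha0])
  rw [le_div_iff₀ (by positivity)] at h
  have : q * a⁻¹ * a = q := by field_simp
  nlinarith [mul_le_mul_of_nonneg_left hexp hq.le]

theorem le_binKLDiv_of_le_inv_one_add_exp {a q c : ℝ} (ha0 : 0 < a) (ha1 : a < 1) (hq0 : 0 < q)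
    (h : q ≤ 1 / (1 + exp ((binEntropy a + c) / a))) : c ≤ binKLDiv a q := by
  have hq1 : q < 1 := h.trans_lt ((div_lt_one (by positivity)).mpr (by linarith [exp_pos ((binEntropy a + c) / a)]))
  have hlog : binEntropy a + c ≤ a * log ((1 - q) / q) := by
    rw [← div_le_iff₀' ha0]
    exact le_log_one_sub_div_of_le_inv_one_add_exp hq0 h
  linarith [sub_binEntropy_le_binKLDiv ha0 ha1 hq0 hq1]

end Real

namespace ProbabilityTheory

variable {Ω ι : Type*} [MeasurableSpace Ω] {μ : Measure Ω} [IsProbabilityMeasure μ]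

theorem mgf_eq_of_forall_eq_zero_or_eq_one {X : Ω → ℝ} (hX : Measurable X)
    (h01 : ∀ ω, X ω = 0 ∨ X ω = 1) (t : ℝ) :
    mgf X μ t = 1 + (exp t - 1) * μ.real {ω | X ω = 1} := by
  have hS : MeasurableSet {ω | X ω = 1} := hX (measurableSet_singleton 1)
  have hexp : (fun ω => exp (t * X ω)) =
      fun ω => {ω | X ω = 1}.indicator (fun _ => exp t - 1) ω + 1 := by
    funext ω
    rcases h01 ω with h | h <;> simp [h]
  rw [mgf, hexp, integral_add ((integrable_const _).indicator hS) (integrable_const 1),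
    integral_indicator_const _ hS]
  simp only [smul_eq_mul, integral_const, probReal_univ]
  ring

theorem one_sub_le_measureReal_of_measureReal_compl_le {s : Set Ω} {δ : ℝ}
    (h : μ.real sᶜ ≤ δ) : 1 - δ ≤ μ.real s := by
  have hunion := measureReal_union_le (μ := μ) s sᶜ
  rw [Set.union_compl_self, probReal_univ] at hunion
  linarith

variable [Fintype ι] {ξ : ι → Ω → ℝ}

theorem measureReal_le_sum_le_exp_mul_pow (hindep : iIndepFun ξ μ) (hm : ∀ i, Measurable (ξ i))
    (h01 : ∀ i ω, ξ i ω = 0 ∨ ξ i ω = 1) (a : ℝ) {t : ℝ} (ht : 0 ≤ t) :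
    μ.real {ω | a ≤ ∑ i, ξ i ω} ≤ exp (-t * a) *
      (1 + (exp t - 1) * ((Fintype.card ι : ℝ)⁻¹ * ∑ i, μ.real {ω | ξ i ω = 1})) ^
        Fintype.card ι := by
  have hint : Integrable (fun ω => exp (t * (∑ i, ξ i) ω)) μ :=
    hindep.integrable_exp_mul_sum hm fun i _ => integrable_exp_mul_of_le t 1 ht
      (hm i).aemeasurable (ae_of_all _ fun ω => by rcases h01 i ω with h | h <;> simp [h])
  have hmgf : mgf (∑ i, ξ i) μ t ≤
      (1 + (exp t - 1) * ((Fintype.card ι : ℝ)⁻¹ * ∑ i, μ.real {ω | ξ i ω = 1})) ^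
        Fintype.card ι := by
    rcases isEmpty_or_nonempty ι with hι | hι
    · simp
    rw [hindep.mgf_sum hm]
    simp_rw [mgf_eq_of_forall_eq_zero_or_eq_one (hm _) (h01 _)]
    refine (prod_le_mean_pow univ fun i _ => ?_).trans_eq ?_
    · have := one_le_exp ht
      have : 0 ≤ μ.real {ω | ξ i ω = 1} := measureReal_nonneg
      nlinarith
    · have hcard : (Fintype.card ι : ℝ) ≠ 0 := by positivity
      rw [card_univ, sum_add_distrib, ← mul_sum, sum_const, card_univ, nsmul_eq_mul, mul_one]
      field_simp
  calc μ.real {ω | a ≤ ∑ i, ξ i ω} ≤ exp (-t * a) * mgf (∑ i, ξ i) μ t := by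
        simpa only [Finset.sum_apply] using measure_ge_le_exp_mul_mgf a ht hint
    _ ≤ _ := by gcongr

theorem measureReal_le_sum_le_exp_neg_binKLDiv (hindep : iIndepFun ξ μ)
    (hm : ∀ i, Measurable (ξ i)) (h01 : ∀ i ω, ξ i ω = 0 ∨ ξ i ω = 1) {q a : ℝ}
    (hq : (Fintype.card ι : ℝ)⁻¹ * ∑ i, μ.real {ω | ξ i ω = 1} = q) (hq0 : 0 < q) (hqa : q ≤ a)
    (ha1 : a < 1) :
    μ.real {ω | Fintype.card ι * a ≤ ∑ i, ξ i ω} ≤ exp (-(Fintype.card ι * binKLDiv a q)) := by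
  have ha0 : 0 < a := hq0.trans_le hqa
  have hratio : 0 < a * (1 - q) / ((1 - a) * q) := by
    have : 0 < 1 - a := by linarith
    have : 0 < 1 - q := by linarith
    positivity
  have ht : 0 ≤ log (a * (1 - q) / ((1 - a) * q)) := by
    apply log_nonneg
    rw [le_div_iff₀ (by nlinarith)]
    nlinarith
  have hchernoff := measureReal_le_sum_le_exp_mul_pow hindep hm h01 (Fintype.card ι * a) ht
  rwa [hq, exp_neg_mul_mul_one_add_pow_eq_exp_neg_binKLDiv ha0 ha1 hq0 (hqa.trans_lt ha1)
    (exp_log hratio)] at hchernoff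

end ProbabilityTheory

theorem bernoulli_average_upper_tail
    {Ω : Type*} [MeasurableSpace Ω] (μ : Measure Ω) [IsProbabilityMeasure μ]
    {N : ℕ} (hN : 0 < N)
    (ξ : Fin N → Ω → ℝ) (hξm : ∀ j, Measurable (ξ j))
    (hξval : ∀ j ω, ξ j ω = 0 ∨ ξ j ω = 1)
    (hindep : iIndepFun ξ μ)
    (p : Fin N → ℝ)
    (hpe : ∀ j, (μ {ω | ξ j ω = 1}).toReal = p j)
    (ε δ : ℝ) (hε0 : 0 < ε) (hε1 : ε < 1) (hδ0 : 0 < δ) (hδ1 : δ < 1)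
    (hpbar0 : 0 < (N : ℝ)⁻¹ * ∑ j, p j)
    (hpbar : (N : ℝ)⁻¹ * ∑ j, p j
      ≤ 1 / (1 + Real.exp ((ε * Real.log (1 / ε) + (1 - ε) * Real.log (1 / (1 - ε))
          + (N : ℝ)⁻¹ * Real.log (1 / δ)) / ε))) :
    1 - δ ≤ (μ {ω | (N : ℝ)⁻¹ * ∑ j, ξ j ω ≤ ε}).toReal := by
  set q := (N : ℝ)⁻¹ * ∑ j, p j
  have hNpos : (0 : ℝ) < N := by exact_mod_cast hN
  have hc : 0 ≤ (N : ℝ)⁻¹ * log (1 / δ) :=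
    mul_nonneg (by positivity) (log_nonneg (by rw [le_div_iff₀ hδ0]; linarith))
  replace hpbar : q ≤ 1 / (1 + exp ((binEntropy ε + (N : ℝ)⁻¹ * log (1 / δ)) / ε)) := by
    simpa only [binEntropy, one_div] using hpbar
  have hKL : log (1 / δ) ≤ N * binKLDiv ε q :=
    (inv_mul_le_iff₀ hNpos).mp (le_binKLDiv_of_le_inv_one_add_exp hε0 hε1 hpbar0 hpbar)
  have htail : μ.real {ω | N * ε ≤ ∑ j, ξ j ω} ≤ δ := by
    have hchernoff := measureReal_le_sum_le_exp_neg_binKLDiv hindep hξm hξval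
      (by simp only [Measure.real, hpe, Fintype.card_fin, q]) hpbar0
      (le_of_le_inv_one_add_exp hε0 hε1 hpbar0 hc hpbar) hε1
    calc _ ≤ exp (-(N * binKLDiv ε q)) := by simpa only [Fintype.card_fin] using hchernoff
      _ ≤ exp (log δ) := by
          rw [one_div, log_inv] at hKL
          gcongr
          linarith
      _ = δ := exp_log hδ0
  refine one_sub_le_measureReal_of_measureReal_compl_le (htail.trans' (measureReal_mono ?_))
  intro ω hω
  simp only [Set.mem_compl_iff, Set.mem_ofPred_eq, not_le] at hω ⊢
  exact ((lt_inv_mul_iff₀ hNpos).mp hω).le
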